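/- arXiv:1905.09256 — 3 statements merged into one kernel-verified Lean document; each statement's English description precedes it below -/
import Mathlib

section
/- Let S be an inverse monoid and let m : S → S be any unary operation. Then m(a) is the maximum element of the σ-class of a (with respect to the natural partial order) for every a ∈ S if and only if the following two conditions hold: (1) a ≤ m(a) for all a ∈ S, and (2) m(a·e) = m(a) for all a ∈ S and all idempotents e of S. In particular, (S; ·, ⁻¹, m, 1) is an F-inverse monoid with max-operation m if and only if (1) and (2) hold. -/
namespace FInvPaper

universe u v w

section Generic
variable {S : Type u}

/-- The natural partial order on an inverse monoid: `a ≤ b` iff `a = b·e` for some idempotent. -/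
def nle [Mul S] (a b : S) : Prop := ∃ e : S, e * e = e ∧ a = b * e

/-- The minimum group congruence σ: `a σ b` iff `a·e = b·e` for some idempotent `e`. -/
def sigma [Mul S] (a b : S) : Prop := ∃ e : S, e * e = e ∧ a * e = b * e

/-- `m` assigns to every element the maximum element of its σ-class. -/
def IsMaxOp [Mul S] (m : S → S) : Prop :=
  ∀ a : S, sigma (m a) a ∧ ∀ b : S, sigma b a → nle b (m a)

/-- A subset of `S` which is an entire σ-class. -/
def IsSigmaClass [Mul S] (A : Set S) : Prop := ∃ a : S, A = {b : S | sigma b a}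

end Generic

/-- Inverse monoids: monoids with an involution satisfying `a·a⁻¹·a = a`, `(a·b)⁻¹ = b⁻¹·a⁻¹`,
in which all idempotents commute. -/
class InverseMonoid (S : Type u) extends Monoid S, Inv S where
  inv_inv : ∀ a : S, a⁻¹⁻¹ = a
  mul_inv_rev : ∀ a b : S, (a * b)⁻¹ = b⁻¹ * a⁻¹
  mul_inv_self_mul : ∀ a : S, a * a⁻¹ * a = a
  idem_comm : ∀ e f : S, e * e = e → f * f = f → e * f = f * e

/-- F-inverse monoids in the enriched signature `(·, ⁻¹, ᵐ, 1)`. -/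
class FInverseMonoid (S : Type u) extends InverseMonoid S where
  mx : S → S
  mx_isMaxOp : IsMaxOp mx

/-- The max-operation of an F-inverse monoid. -/
def mx {S : Type u} [FInverseMonoid S] : S → S := FInverseMonoid.mx

section InverseMonoidLemmas

variable {S : Type u} [InverseMonoid S]

lemma mul_inv_idem (a : S) : (a * a⁻¹) * (a * a⁻¹) = a * a⁻¹ := by
  conv_lhs => rw [← mul_assoc, InverseMonoid.mul_inv_self_mul]

lemma inv_mul_self_mul (a : S) : a⁻¹ * a * a⁻¹ = a⁻¹ := by
  have h := InverseMonoid.mul_inv_self_mul (a := a⁻¹)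
  rwa [InverseMonoid.inv_inv] at h

lemma inv_mul_idem (a : S) : (a⁻¹ * a) * (a⁻¹ * a) = a⁻¹ * a := by
  conv_lhs => rw [← mul_assoc, inv_mul_self_mul]

lemma idem_inv {e : S} (he : e * e = e) : e⁻¹ = e := by
  have h1 : e⁻¹ * e⁻¹ = e⁻¹ := by rw [← InverseMonoid.mul_inv_rev, he]
  have hc : e * e⁻¹ = e⁻¹ * e := InverseMonoid.idem_comm e e⁻¹ he h1
  have h2 : e = e * e⁻¹ := by
    calc e = e * e⁻¹ * e := (InverseMonoid.mul_inv_self_mul e).symm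
    _ = e * (e⁻¹ * e) := mul_assoc _ _ _
    _ = e * (e * e⁻¹) := by rw [hc]
    _ = e * e * e⁻¹ := (mul_assoc _ _ _).symm
    _ = e * e⁻¹ := by rw [he]
  have h3 : e⁻¹ = e⁻¹ * e := by
    calc e⁻¹ = e⁻¹ * e * e⁻¹ := (inv_mul_self_mul e).symm
    _ = e⁻¹ * (e * e⁻¹) := mul_assoc _ _ _
    _ = e⁻¹ * (e⁻¹ * e) := by rw [hc]
    _ = e⁻¹ * e⁻¹ * e := (mul_assoc _ _ _).symm
    _ = e⁻¹ * e := by rw [h1]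
  rw [h3, ← hc, ← h2]

lemma idem_mul_idem {e f : S} (he : e * e = e) (hf : f * f = f) :
    (e * f) * (e * f) = e * f := by
  calc (e * f) * (e * f) = e * (f * (e * f)) := mul_assoc _ _ _
  _ = e * (f * e * f) := by rw [← mul_assoc f e f]
  _ = e * (e * f * f) := by rw [← InverseMonoid.idem_comm e f he hf]
  _ = e * (e * (f * f)) := by rw [mul_assoc e f f]
  _ = e * (e * f) := by rw [hf]
  _ = e * e * f := (mul_assoc _ _ _).symm
  _ = e * f := by rw [he]

lemma sigma_refl (a : S) : sigma a a := ⟨1, one_mul 1, rfl⟩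

lemma sigma_symm {a b : S} (h : sigma a b) : sigma b a := by
  obtain ⟨e, he, hab⟩ := h
  exact ⟨e, he, hab.symm⟩

lemma sigma_trans {a b c : S} (h₁ : sigma a b) (h₂ : sigma b c) : sigma a c := by
  obtain ⟨e, he, h1⟩ := h₁
  obtain ⟨f, hf, h2⟩ := h₂
  refine ⟨e * f, idem_mul_idem he hf, ?_⟩
  calc a * (e * f) = a * e * f := (mul_assoc _ _ _).symm
  _ = b * e * f := by rw [h1]
  _ = b * (e * f) := mul_assoc _ _ _
  _ = b * (f * e) := by rw [InverseMonoid.idem_comm e f he hf]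
  _ = b * f * e := (mul_assoc _ _ _).symm
  _ = c * f * e := by rw [h2]
  _ = c * (f * e) := mul_assoc _ _ _
  _ = c * (e * f) := by rw [InverseMonoid.idem_comm e f he hf]

lemma sigma_mul_left {a b : S} (c : S) (h : sigma a b) : sigma (c * a) (c * b) := by
  obtain ⟨e, he, hab⟩ := h
  exact ⟨e, he, by rw [mul_assoc, hab, ← mul_assoc]⟩

lemma inner_lemma {e : S} (he : e * e = e) (a : S) :
    a⁻¹ * (a * e * a⁻¹) = e * a⁻¹ := by
  calc a⁻¹ * (a * e * a⁻¹) = a⁻¹ * (a * e) * a⁻¹ := by rw [← mul_assoc a⁻¹ (a * e) a⁻¹]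
  _ = a⁻¹ * a * e * a⁻¹ := by rw [← mul_assoc a⁻¹ a e]
  _ = e * (a⁻¹ * a) * a⁻¹ := by rw [InverseMonoid.idem_comm (a⁻¹ * a) e (inv_mul_idem a) he]
  _ = e * (a⁻¹ * a * a⁻¹) := by rw [mul_assoc e (a⁻¹ * a) a⁻¹]
  _ = e * a⁻¹ := by rw [inv_mul_self_mul]

lemma sigma_inv {a b : S} (h : sigma a b) : sigma a⁻¹ b⁻¹ := by
  obtain ⟨e, he, hab⟩ := h
  have key5 : e * a⁻¹ = e * b⁻¹ := by
    have h' : (a * e)⁻¹ = (b * e)⁻¹ := by rw [hab]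
    rwa [InverseMonoid.mul_inv_rev, InverseMonoid.mul_inv_rev, idem_inv he] at h'
  have key1 : (a * e * a⁻¹) * (a * e * a⁻¹) = a * e * a⁻¹ := by
    calc (a * e * a⁻¹) * (a * e * a⁻¹) = a * e * (a⁻¹ * (a * e * a⁻¹)) := mul_assoc _ _ _
    _ = a * e * (e * a⁻¹) := by rw [inner_lemma he a]
    _ = a * e * e * a⁻¹ := (mul_assoc _ _ _).symm
    _ = a * (e * e) * a⁻¹ := by rw [mul_assoc a e e]
    _ = a * e * a⁻¹ := by rw [he]
  have key3 : a * e * a⁻¹ = b * e * b⁻¹ := by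
    calc a * e * a⁻¹ = a * (e * e) * a⁻¹ := by rw [he]
    _ = a * e * e * a⁻¹ := by rw [← mul_assoc a e e]
    _ = a * e * (e * a⁻¹) := mul_assoc _ _ _
    _ = a * e * (e * b⁻¹) := by rw [key5]
    _ = b * e * (e * b⁻¹) := by rw [hab]
    _ = b * e * e * b⁻¹ := (mul_assoc _ _ _).symm
    _ = b * (e * e) * b⁻¹ := by rw [mul_assoc b e e]
    _ = b * e * b⁻¹ := by rw [he]
  refine ⟨a * e * a⁻¹, key1, ?_⟩
  rw [inner_lemma he a, key5, key3, inner_lemma he b]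

lemma sigma_mul_right {a b : S} (c : S) (h : sigma a b) : sigma (a * c) (b * c) := by
  have h1 := sigma_mul_left c⁻¹ (sigma_inv h)
  have h2 := sigma_inv h1
  rwa [InverseMonoid.mul_inv_rev c⁻¹ a⁻¹, InverseMonoid.mul_inv_rev c⁻¹ b⁻¹,
    InverseMonoid.inv_inv, InverseMonoid.inv_inv, InverseMonoid.inv_inv] at h2

instance sigmaSetoid (S : Type u) [InverseMonoid S] : Setoid S where
  r := sigma
  iseqv := ⟨sigma_refl, sigma_symm, sigma_trans⟩

/-- The maximum group quotient `S/σ`. -/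
def GQuot (S : Type u) [InverseMonoid S] : Type u := Quotient (sigmaSetoid S)

/-- The σ-class of an element, as an element of the maximum group quotient. -/
def σclass {S : Type u} [InverseMonoid S] (a : S) : GQuot S := Quotient.mk (sigmaSetoid S) a

instance (S : Type u) [InverseMonoid S] : Group (GQuot S) where
  mul := Quotient.map₂ (· * ·) (fun _ _ h₁ _ _ h₂ =>
    sigma_trans (sigma_mul_right _ h₁) (sigma_mul_left _ h₂))
  one := σclass 1
  inv := Quotient.map (·⁻¹) (fun _ _ h => sigma_inv h)
  mul_assoc := by
    intro a b c
    induction a using Quotient.ind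
    induction b using Quotient.ind
    induction c using Quotient.ind
    exact congrArg (Quotient.mk _) (mul_assoc _ _ _)
  one_mul := by
    intro a
    induction a using Quotient.ind
    exact congrArg (Quotient.mk _) (one_mul _)
  mul_one := by
    intro a
    induction a using Quotient.ind
    exact congrArg (Quotient.mk _) (mul_one _)
  inv_mul_cancel := by
    intro a
    induction a using Quotient.ind with
    | _ a =>
      refine Quotient.sound ⟨a⁻¹ * a, inv_mul_idem a, ?_⟩
      rw [one_mul]
      exact inv_mul_idem a

end InverseMonoidLemmas


section Graphs

variable {G : Type u} [Group G] {X : Type v}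

/-- A subgraph of the Cayley graph `Cay(G)` of the `X`-generated group `G` (with assignment
mapping `φ : X → G`), represented by its set of vertices and its set of positive edges:
the positive edge `(g, x)` goes from `g` to `g * φ x` and carries the label `x`; every
subgraph closed under edge inversion is uniquely determined by this data. -/
structure Subgraph (φ : X → G) : Type (max u v) where
  verts : Set G
  edges : Set (G × X)
  src_mem : ∀ e ∈ edges, Prod.fst e ∈ verts
  tgt_mem : ∀ e ∈ edges, e.1 * φ e.2 ∈ verts

namespace Subgraph

variable {φ : X → G}

lemma ext' {Γ Δ : Subgraph φ} (hv : Γ.verts = Δ.verts) (he : Γ.edges = Δ.edges) : Γ = Δ := by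
  cases Γ; cases Δ; cases hv; cases he; rfl

/-- Union of subgraphs. -/
def union (Γ Δ : Subgraph φ) : Subgraph φ where
  verts := Γ.verts ∪ Δ.verts
  edges := Γ.edges ∪ Δ.edges
  src_mem := by
    intro e he
    rcases he with h | h
    · exact Set.mem_union_left _ (Γ.src_mem e h)
    · exact Set.mem_union_right _ (Δ.src_mem e h)
  tgt_mem := by
    intro e he
    rcases he with h | h
    · exact Set.mem_union_left _ (Γ.tgt_mem e h)
    · exact Set.mem_union_right _ (Δ.tgt_mem e h)

instance : Union (Subgraph φ) := ⟨union⟩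

@[simp] lemma union_verts (Γ Δ : Subgraph φ) : (Γ ∪ Δ).verts = Γ.verts ∪ Δ.verts := rfl
@[simp] lemma union_edges (Γ Δ : Subgraph φ) : (Γ ∪ Δ).edges = Γ.edges ∪ Δ.edges := rfl

/-- Left translation of a subgraph by a group element. -/
def smul (g : G) (Γ : Subgraph φ) : Subgraph φ where
  verts := (g * ·) '' Γ.verts
  edges := (fun e => (g * e.1, e.2)) '' Γ.edges
  src_mem := by
    rintro e ⟨e', he', rfl⟩
    exact ⟨e'.1, Γ.src_mem e' he', rfl⟩
  tgt_mem := by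
    rintro e ⟨e', he', rfl⟩
    exact ⟨e'.1 * φ e'.2, Γ.tgt_mem e' he', (mul_assoc g e'.1 (φ e'.2)).symm⟩

instance : SMul G (Subgraph φ) := ⟨smul⟩

@[simp] lemma smul_verts (g : G) (Γ : Subgraph φ) : (g • Γ).verts = (g * ·) '' Γ.verts := rfl
@[simp] lemma smul_edges (g : G) (Γ : Subgraph φ) :
    (g • Γ).edges = (fun e : G × X => (g * e.1, e.2)) '' Γ.edges := rfl

/-- The subgraph relation. -/
instance : HasSubset (Subgraph φ) := ⟨fun Γ Δ => Γ.verts ⊆ Δ.verts ∧ Γ.edges ⊆ Δ.edges⟩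

lemma subset_iff (Γ Δ : Subgraph φ) : Γ ⊆ Δ ↔ Γ.verts ⊆ Δ.verts ∧ Γ.edges ⊆ Δ.edges := Iff.rfl

/-- Finiteness of a subgraph. -/
def IsFinite (Γ : Subgraph φ) : Prop := Γ.verts.Finite ∧ Γ.edges.Finite

/-- A subgraph has no isolated vertices if each of its vertices is an endpoint of one
of its edges. -/
def NoIsolated (Γ : Subgraph φ) : Prop :=
  ∀ v ∈ Γ.verts, ∃ e ∈ Γ.edges, v = e.1 ∨ v = e.1 * φ e.2

/-- `Ed(Γ)`: the subgraph spanned by the edges of `Γ`, i.e. `Γ` with all isolated vertices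
removed. -/
def ed (Γ : Subgraph φ) : Subgraph φ where
  verts := {v | ∃ e ∈ Γ.edges, v = e.1 ∨ v = e.1 * φ e.2}
  edges := Γ.edges
  src_mem := fun e he => ⟨e, he, Or.inl rfl⟩
  tgt_mem := fun e he => ⟨e, he, Or.inr rfl⟩

lemma ed_finite {Γ : Subgraph φ} (h : Γ.IsFinite) : Γ.ed.IsFinite := by
  constructor
  · have hsub : Γ.ed.verts ⊆
        (fun e : G × X => e.1) '' Γ.edges ∪ (fun e : G × X => e.1 * φ e.2) '' Γ.edges := by
      rintro v ⟨e, he, rfl | rfl⟩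
      · exact Set.mem_union_left _ ⟨e, he, rfl⟩
      · exact Set.mem_union_right _ ⟨e, he, rfl⟩
    exact ((h.2.image _).union (h.2.image _)).subset hsub
  · exact h.2

lemma ed_noIsolated (Γ : Subgraph φ) : Γ.ed.NoIsolated := fun _ hv => hv

end Subgraph

open Subgraph

variable {φ : X → G}

/-- The subgraph with the single vertex `g` and no edges. -/
def vertexG (φ : X → G) (g : G) : Subgraph φ :=
  ⟨{g}, ∅, by simp, by simp⟩

/-- `Δ_g`: the edgeless subgraph with vertices `1` and `g`. -/
def deltaG (φ : X → G) (g : G) : Subgraph φ :=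
  ⟨{1, g}, ∅, by simp, by simp⟩

/-- The subgraph spanned by a single (positive) edge. -/
def edgeG (φ : X → G) (e : G × X) : Subgraph φ where
  verts := {e.1, e.1 * φ e.2}
  edges := {e}
  src_mem := by
    intro e' he'
    rw [Set.mem_singleton_iff] at he'
    subst he'
    exact Set.mem_insert _ _
  tgt_mem := by
    intro e' he'
    rw [Set.mem_singleton_iff] at he'
    subst he'
    exact Set.mem_insert_of_mem _ rfl

/-- The empty subgraph. -/
def emptyG (φ : X → G) : Subgraph φ := ⟨∅, ∅, by simp, by simp⟩

lemma edgeG_noIsolated (φ : X → G) (e : G × X) : (edgeG φ e).NoIsolated := by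
  intro v hv
  refine ⟨e, Set.mem_singleton e, ?_⟩
  simpa [edgeG] using hv

/-- Two vertices are adjacent in `Γ` if they are connected by an edge of `Γ`. -/
def adj (Γ : Subgraph φ) (u v : G) : Prop :=
  ∃ e ∈ Γ.edges, (u = e.1 ∧ v = e.1 * φ e.2) ∨ (v = e.1 ∧ u = e.1 * φ e.2)

/-- A subgraph is connected if any two of its vertices are joined by a path running in it. -/
def Connected (Γ : Subgraph φ) : Prop :=
  ∀ u ∈ Γ.verts, ∀ v ∈ Γ.verts, Relation.ReflTransGen (adj Γ) u v

lemma adj_mono {Γ Δ : Subgraph φ} (h : Γ.edges ⊆ Δ.edges) {u v : G} (ha : adj Γ u v) :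
    adj Δ u v := by
  obtain ⟨e, he, hc⟩ := ha
  exact ⟨e, h he, hc⟩

lemma Connected.union {Γ Δ : Subgraph φ} (hΓ : Connected Γ) (hΔ : Connected Δ) (w : G)
    (hw₁ : w ∈ Γ.verts) (hw₂ : w ∈ Δ.verts) : Connected (Γ ∪ Δ) := by
  have hsΓ : Γ.edges ⊆ (Γ ∪ Δ).edges := by
    rw [union_edges]; exact Set.subset_union_left
  have hsΔ : Δ.edges ⊆ (Γ ∪ Δ).edges := by
    rw [union_edges]; exact Set.subset_union_right
  have mΓ : ∀ {p q : G}, Relation.ReflTransGen (adj Γ) p q →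
      Relation.ReflTransGen (adj (Γ ∪ Δ)) p q :=
    fun h => Relation.ReflTransGen.mono (fun _ _ h' => adj_mono hsΓ h') _ _ h
  have mΔ : ∀ {p q : G}, Relation.ReflTransGen (adj Δ) p q →
      Relation.ReflTransGen (adj (Γ ∪ Δ)) p q :=
    fun h => Relation.ReflTransGen.mono (fun _ _ h' => adj_mono hsΔ h') _ _ h
  intro u hu v hv
  rw [union_verts] at hu hv
  rcases hu with hu | hu <;> rcases hv with hv | hv
  · exact mΓ (hΓ u hu v hv)
  · exact (mΓ (hΓ u hu w hw₁)).trans (mΔ (hΔ w hw₂ v hv))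
  · exact (mΔ (hΔ u hu w hw₂)).trans (mΓ (hΓ w hw₁ v hv))
  · exact mΔ (hΔ u hu v hv)

lemma Connected.smul {Γ : Subgraph φ} (g : G) (h : Connected Γ) : Connected (g • Γ) := by
  intro u hu v hv
  rw [smul_verts] at hu hv
  obtain ⟨u', hu', rfl⟩ := hu
  obtain ⟨v', hv', rfl⟩ := hv
  refine Relation.ReflTransGen.lift (fun z => g * z) ?_ _ _ (h u' hu' v' hv')
  rintro p q ⟨e, he, hc⟩
  refine ⟨(g * e.1, e.2), ?_, ?_⟩
  · rw [smul_edges]; exact ⟨e, he, rfl⟩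
  · rcases hc with ⟨rfl, rfl⟩ | ⟨rfl, rfl⟩
    · exact Or.inl ⟨rfl, (mul_assoc _ _ _).symm⟩
    · exact Or.inr ⟨rfl, (mul_assoc _ _ _).symm⟩

lemma Subgraph.NoIsolated.union {Γ Δ : Subgraph φ} (hΓ : Γ.NoIsolated) (hΔ : Δ.NoIsolated) :
    (Γ ∪ Δ).NoIsolated := by
  intro v hv
  rw [union_verts] at hv
  rcases hv with hv | hv
  · obtain ⟨e, he, hor⟩ := hΓ v hv
    exact ⟨e, by rw [union_edges]; exact Set.mem_union_left _ he, hor⟩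
  · obtain ⟨e, he, hor⟩ := hΔ v hv
    exact ⟨e, by rw [union_edges]; exact Set.mem_union_right _ he, hor⟩

lemma Subgraph.NoIsolated.smul {Γ : Subgraph φ} (g : G) (h : Γ.NoIsolated) :
    (g • Γ).NoIsolated := by
  intro v hv
  rw [smul_verts] at hv
  obtain ⟨u, hu, rfl⟩ := hv
  obtain ⟨e, he, hor⟩ := h u hu
  refine ⟨(g * e.1, e.2), by rw [smul_edges]; exact ⟨e, he, rfl⟩, ?_⟩
  rcases hor with rfl | rfl
  · exact Or.inl rfl
  · exact Or.inr (mul_assoc _ _ _).symm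

end Graphs


section Expansions

variable {G : Type u} [Group G] {X : Type v} {φ : X → G}

open Subgraph

/-- `F(G)`: pairs `(Γ, g)` where `Γ` is a finite subgraph of `Cay(G)` having `1` and `g`
among its vertices. -/
structure FExp (φ : X → G) : Type (max u v) where
  graph : Subgraph φ
  elt : G
  finite : graph.IsFinite
  one_mem : (1 : G) ∈ graph.verts
  elt_mem : elt ∈ graph.verts

namespace FExp

lemma ext' {a b : FExp φ} (hg : a.graph = b.graph) (he : a.elt = b.elt) : a = b := by
  cases a; cases b; cases hg; cases he; rfl

instance : Mul (FExp φ) :=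
  ⟨fun a b =>
    { graph := a.graph ∪ a.elt • b.graph
      elt := a.elt * b.elt
      finite := ⟨by
          rw [union_verts, smul_verts]
          exact a.finite.1.union (b.finite.1.image _),
        by
          rw [union_edges, smul_edges]
          exact a.finite.2.union (b.finite.2.image _)⟩
      one_mem := by
        rw [union_verts]
        exact Set.mem_union_left _ a.one_mem
      elt_mem := by
        rw [union_verts]
        refine Set.mem_union_right _ ?_
        rw [smul_verts]
        exact ⟨b.elt, b.elt_mem, rfl⟩ }⟩

@[simp] lemma mul_graph (a b : FExp φ) : (a * b).graph = a.graph ∪ a.elt • b.graph := rfl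
@[simp] lemma mul_elt (a b : FExp φ) : (a * b).elt = a.elt * b.elt := rfl

instance : One (FExp φ) :=
  ⟨{ graph := deltaG φ 1
     elt := 1
     finite := ⟨(Set.finite_singleton (1 : G)).insert 1, Set.finite_empty⟩
     one_mem := Set.mem_insert 1 _
     elt_mem := Set.mem_insert 1 _ }⟩

@[simp] lemma one_graph : (1 : FExp φ).graph = deltaG φ 1 := rfl
@[simp] lemma one_elt : (1 : FExp φ).elt = 1 := rfl

instance : Inv (FExp φ) :=
  ⟨fun a =>
    { graph := a.elt⁻¹ • a.graph
      elt := a.elt⁻¹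
      finite := ⟨by rw [smul_verts]; exact a.finite.1.image _,
        by rw [smul_edges]; exact a.finite.2.image _⟩
      one_mem := by
        rw [smul_verts]
        exact ⟨a.elt, a.elt_mem, inv_mul_cancel a.elt⟩
      elt_mem := by
        rw [smul_verts]
        exact ⟨1, a.one_mem, mul_one _⟩ }⟩

@[simp] lemma inv_graph (a : FExp φ) : (a⁻¹).graph = a.elt⁻¹ • a.graph := rfl
@[simp] lemma inv_elt (a : FExp φ) : (a⁻¹).elt = a.elt⁻¹ := rfl

end FExp

/-- The element `(Δ_g, g)` of `F(G)`. -/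
def maxElt (φ : X → G) (g : G) : FExp φ where
  graph := deltaG φ g
  elt := g
  finite := ⟨(Set.finite_singleton g).insert 1, Set.finite_empty⟩
  one_mem := Set.mem_insert 1 _
  elt_mem := Set.mem_insert_of_mem _ rfl

/-- The max-operation `(Γ, g) ↦ (Δ_g, g)` on `F(G)`. -/
def mxOp (a : FExp φ) : FExp φ := maxElt φ a.elt

/-- The generator `(Γ_x, x_G)` of `F(G)`. -/
def genElt (φ : X → G) (x : X) : FExp φ where
  graph := edgeG φ (1, x)
  elt := φ x
  finite := ⟨(Set.finite_singleton _).insert _, Set.finite_singleton _⟩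
  one_mem := Set.mem_insert 1 _
  elt_mem := by simp [edgeG]

/-- `M(G)`: the Margolis–Meakin expansion; pairs `(Γ, g)` where `Γ` is a finite *connected*
subgraph of `Cay(G)` having `1` and `g` among its vertices. -/
structure MExp (φ : X → G) : Type (max u v) where
  graph : Subgraph φ
  elt : G
  finite : graph.IsFinite
  connected : Connected graph
  one_mem : (1 : G) ∈ graph.verts
  elt_mem : elt ∈ graph.verts

namespace MExp

instance : Mul (MExp φ) :=
  ⟨fun a b =>
    { graph := a.graph ∪ a.elt • b.graph
      elt := a.elt * b.elt
      finite := ⟨by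
          rw [union_verts, smul_verts]
          exact a.finite.1.union (b.finite.1.image _),
        by
          rw [union_edges, smul_edges]
          exact a.finite.2.union (b.finite.2.image _)⟩
      connected := by
        refine Connected.union a.connected (Connected.smul a.elt b.connected) a.elt a.elt_mem ?_
        rw [smul_verts]
        exact ⟨1, b.one_mem, mul_one _⟩
      one_mem := by
        rw [union_verts]
        exact Set.mem_union_left _ a.one_mem
      elt_mem := by
        rw [union_verts]
        refine Set.mem_union_right _ ?_
        rw [smul_verts]
        exact ⟨b.elt, b.elt_mem, rfl⟩ }⟩

end MExp

/-- `P(G)`: pairs `(Γ, g)` where `Γ` is a finite subgraph of `Cay(G)` without isolated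
vertices and `g ∈ G` (a model of the semidirect product of the semilattice of such
subgraphs by `G`). -/
structure PExp (φ : X → G) : Type (max u v) where
  graph : Subgraph φ
  elt : G
  finite : graph.IsFinite
  noIsolated : graph.NoIsolated

namespace PExp

lemma ext' {a b : PExp φ} (hg : a.graph = b.graph) (he : a.elt = b.elt) : a = b := by
  cases a; cases b; cases hg; cases he; rfl

instance : Mul (PExp φ) :=
  ⟨fun a b =>
    { graph := a.graph ∪ a.elt • b.graph
      elt := a.elt * b.elt
      finite := ⟨by
          rw [union_verts, smul_verts]
          exact a.finite.1.union (b.finite.1.image _),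
        by
          rw [union_edges, smul_edges]
          exact a.finite.2.union (b.finite.2.image _)⟩
      noIsolated := a.noIsolated.union (b.noIsolated.smul a.elt) }⟩

@[simp] lemma mul_graph (a b : PExp φ) : (a * b).graph = a.graph ∪ a.elt • b.graph := rfl
@[simp] lemma mul_elt (a b : PExp φ) : (a * b).elt = a.elt * b.elt := rfl

instance : One (PExp φ) :=
  ⟨{ graph := emptyG φ
     elt := 1
     finite := ⟨Set.finite_empty, Set.finite_empty⟩
     noIsolated := by intro v hv; simp [emptyG] at hv }⟩

@[simp] lemma one_graph : (1 : PExp φ).graph = emptyG φ := rfl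
@[simp] lemma one_elt : (1 : PExp φ).elt = 1 := rfl

instance : Inv (PExp φ) :=
  ⟨fun a =>
    { graph := a.elt⁻¹ • a.graph
      elt := a.elt⁻¹
      finite := ⟨by rw [smul_verts]; exact a.finite.1.image _,
        by rw [smul_edges]; exact a.finite.2.image _⟩
      noIsolated := a.noIsolated.smul _ }⟩

@[simp] lemma inv_graph (a : PExp φ) : (a⁻¹).graph = a.elt⁻¹ • a.graph := rfl
@[simp] lemma inv_elt (a : PExp φ) : (a⁻¹).elt = a.elt⁻¹ := rfl

end PExp

/-- The max-operation `(Γ, g) ↦ (∅, g)` on `P(G)`. -/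
def pMax (a : PExp φ) : PExp φ where
  graph := emptyG φ
  elt := a.elt
  finite := ⟨Set.finite_empty, Set.finite_empty⟩
  noIsolated := by intro v hv; simp [emptyG] at hv

/-- The generator `(Γ_x, x_G)` of `P(G)`. -/
def genEltP (φ : X → G) (x : X) : PExp φ where
  graph := edgeG φ (1, x)
  elt := φ x
  finite := ⟨(Set.finite_singleton _).insert _, Set.finite_singleton _⟩
  noIsolated := edgeG_noIsolated φ (1, x)

/-- The canonical map `F(G) → P(G)`, `(Γ, g) ↦ (Ed(Γ), g)`. -/
def edMap (a : FExp φ) : PExp φ where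
  graph := a.graph.ed
  elt := a.elt
  finite := ed_finite a.finite
  noIsolated := a.graph.ed_noIsolated

/-- The relation `θ` on `F(G)`: `(Γ,g) θ (Ξ,h)` iff `g = h` and `Ed(Γ) = Ed(Ξ)`. -/
def thetaRel (φ : X → G) (a b : FExp φ) : Prop := a.elt = b.elt ∧ a.graph.ed = b.graph.ed

end Expansions

section Terms

variable {X : Type v}

/-- Terms of the term algebra `I^m_X` in their (unique) normal form
`u₀ · m(v₁) · u₁ ⋯ u_{n-1} · m(vₙ) · uₙ` with `uᵢ, vⱼ` words in the free monoid with
involution `I_X` on `X` (represented as lists over `X ⊕ X`, where `inl x` stands for `x`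
and `inr x` for `x⁻¹`): the first component is `u₀`, and the second lists the pairs
`(vᵢ, uᵢ)`. -/
abbrev MTerm (X : Type v) := List (X ⊕ X) × List (List (X ⊕ X) × List (X ⊕ X))

/-- Value of a letter of `X ⊔ X⁻¹`. -/
def letterVal {M : Type w} [Monoid M] [Inv M] (f : X → M) : X ⊕ X → M
  | Sum.inl x => f x
  | Sum.inr x => (f x)⁻¹

/-- Value of a word of `I_X`. -/
def wordVal {M : Type w} [Monoid M] [Inv M] (f : X → M) (u : List (X ⊕ X)) : M :=
  (u.map (letterVal f)).prod

/-- Value `[t]` of a term `t ∈ I^m_X` under the assignment `f` of the generators,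
where `mop` is interpreted as the operation `m`. -/
def termVal {M : Type w} [Monoid M] [Inv M] (f : X → M) (mop : M → M) (t : MTerm X) : M :=
  wordVal f t.1 * (t.2.map (fun p => mop (wordVal f p.1) * wordVal f p.2)).prod

end Terms

section Journeys

variable {G : Type u} [Group G] {X : Type v}

/-- The subgraph of `Cay(G)` spanned by the path starting at `g` with label the given word;
for the empty word it is the single vertex `g`. -/
def pathGraph (φ : X → G) : G → List (X ⊕ X) → Subgraph φ
  | g, [] => vertexG φ g
  | g, Sum.inl x :: u => edgeG φ (g, x) ∪ pathGraph φ (g * φ x) u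
  | g, Sum.inr x :: u => edgeG φ (g * (φ x)⁻¹, x) ∪ pathGraph φ (g * (φ x)⁻¹) u

/-- The subgraph of `Cay(G)` spanned by the journey `j_g(w)` induced by the term
`w = u₀ · m(v₁) · u₁ ⋯ · m(vₙ) · uₙ` starting at `g`: traverse the path labelled `u₀`
from `g`, jump to `g·[u₀v₁]`, traverse the path labelled `u₁`, and so on. -/
def journeyGraph (φ : X → G) : G → List (X ⊕ X) → List (List (X ⊕ X) × List (X ⊕ X)) →
    Subgraph φ
  | g, u, [] => pathGraph φ g u
  | g, u, (v, u') :: rest =>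
      pathGraph φ g u ∪ journeyGraph φ (g * wordVal φ u * wordVal φ v) u' rest

end Journeys

section MaxOperation

variable {S : Type u}

lemma sigma_of_nle [Semigroup S] {a b : S} (h : nle a b) : sigma a b := by
  obtain ⟨e, he, rfl⟩ := h
  exact ⟨e, he, by rw [mul_assoc, he]⟩

lemma sigma_mul_idem [Semigroup S] (a : S) {e : S} (he : e * e = e) : sigma (a * e) a :=
  sigma_of_nle ⟨e, he, rfl⟩

lemma nle_antisymm [InverseMonoid S] {a b : S} (hab : nle a b) (hba : nle b a) : a = b := by
  obtain ⟨e, he, hab⟩ := hab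
  obtain ⟨f, hf, hba⟩ := hba
  have ha : a = a * (f * e) := by rw [← mul_assoc, ← hba, ← hab]
  symm
  calc b = a * f := hba
    _ = a * (f * e) * f := by rw [← ha]
    _ = a * (f * e) := by
      rw [mul_assoc, mul_assoc, InverseMonoid.idem_comm e f he hf, ← mul_assoc f f e, hf]
    _ = a := ha.symm

lemma IsMaxOp.eq_of_sigma [InverseMonoid S] {m : S → S} (hm : IsMaxOp m)
    {a b : S} (hab : sigma a b) : m a = m b :=
  nle_antisymm ((hm b).2 _ (sigma_trans (hm a).1 hab))
    ((hm a).2 _ (sigma_trans (hm b).1 (sigma_symm hab)))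

lemma eq_of_sigma_of_map_mul_idem [Mul S] {m : S → S}
    (hm : ∀ a e : S, e * e = e → m (a * e) = m a) {a b : S} (hab : sigma a b) : m a = m b := by
  obtain ⟨e, he, hab⟩ := hab
  rw [← hm a e he, hab, hm b e he]

end MaxOperation

/-- For an inverse monoid `S` and a unary operation `m : S → S`, `m a` is the
maximum element of the σ-class of `a` for every `a` if and only if (1) `a ≤ m a` for all `a`,
and (2) `m (a·e) = m a` for all `a` and all idempotents `e`.  In particular,
`(S; ·, ⁻¹, m, 1)` is an F-inverse monoid with max-operation `m` iff (1) and (2) hold. -/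
theorem statement0 {S : Type u} [InverseMonoid S] (m : S → S) :
    IsMaxOp m ↔
      ((∀ a : S, nle a (m a)) ∧ ∀ (a e : S), e * e = e → m (a * e) = m a) := by
  constructor
  · intro hm
    exact ⟨fun a => (hm a).2 a (sigma_refl a),
      fun a e he => hm.eq_of_sigma (sigma_mul_idem a he)⟩
  · rintro ⟨hle, hm⟩ a
    refine ⟨sigma_symm (sigma_of_nle (hle a)), fun b hb => ?_⟩
    rw [← eq_of_sigma_of_map_mul_idem hm hb]
    exact hle b

end FInvPaper
end

section
/- Let S be an F-inverse monoid and let T be a subset of S that contains every max-element of S (i.e., m(S) ⊆ T) and is closed under multiplication. Then T contains 1, is closed under ⁻¹ and under m, and, with the restricted operations, T is itself an F-inverse monoid whose max-operation is the restriction of m (that is, for every t ∈ T, m(t) is the maximum element of the class of t under the minimum group congruence of T). -/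
namespace FInvPaper

universe u v w

/-! Every element `a` lies below `m a`, so `a = m a · (a⁻¹a)`; the idempotent `a⁻¹a` lies in `T`
as soon as `T` is closed under `⁻¹`, and this gives both halves of the F-inverse property of `T`.
Closure under `⁻¹` comes from `a⁻¹ = m(a⁻¹) · a · m(a⁻¹)`, an instance of `y x⁻¹ y = x` for
`x ≤ y`, and `1 ∈ T` because `1 ≤ m 1` forces `m 1 = 1`. -/

section NaturalOrder

variable {S : Type u} [InverseMonoid S] {a b : S}

lemma nle.eq_mul_inv_mul (h : nle a b) : a = b * (a⁻¹ * a) := by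
  obtain ⟨e, he, rfl⟩ := h
  have hdom : (b * e)⁻¹ * (b * e) = b⁻¹ * b * e := by
    rw [InverseMonoid.mul_inv_rev, idem_inv he, mul_assoc, ← mul_assoc b⁻¹, ← mul_assoc,
      InverseMonoid.idem_comm e _ he (inv_mul_idem b), mul_assoc, he]
  rw [hdom, ← mul_assoc, ← mul_assoc, InverseMonoid.mul_inv_self_mul]

lemma nle.mul_inv_mul_eq (h : nle a b) : b * a⁻¹ * b = a := by
  obtain ⟨e, he, rfl⟩ := h
  calc b * (b * e)⁻¹ * b = b * (e * (b⁻¹ * b)) := by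
        rw [InverseMonoid.mul_inv_rev, idem_inv he, mul_assoc, mul_assoc]
    _ = b * b⁻¹ * b * e := by
        rw [InverseMonoid.idem_comm e _ he (inv_mul_idem b), ← mul_assoc, ← mul_assoc]
    _ = b * e := by rw [InverseMonoid.mul_inv_self_mul]

lemma eq_one_of_one_nle (h : nle 1 b) : b = 1 := by
  obtain ⟨e, he, h1⟩ := h
  have he1 : e = 1 := by rw [← one_mul e, h1, mul_assoc, he, ← h1]
  calc b = b * e := by rw [he1, mul_one]
    _ = 1 := h1.symm

end NaturalOrder

section MaxOperation

variable {S : Type u} [FInverseMonoid S]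

lemma nle_mx_of_sigma {a b : S} (h : sigma b a) : nle b (mx a) :=
  (FInverseMonoid.mx_isMaxOp a).2 b h

lemma nle_mx (a : S) : nle a (mx a) :=
  nle_mx_of_sigma (sigma_refl a)

lemma mx_mul_inv_mul_self (a : S) : mx a * (a⁻¹ * a) = a :=
  (nle_mx a).eq_mul_inv_mul.symm

lemma mx_inv_mul_mul_mx_inv (a : S) : mx a⁻¹ * a * mx a⁻¹ = a⁻¹ := by
  simpa only [InverseMonoid.inv_inv] using (nle_mx a⁻¹).mul_inv_mul_eq

lemma mx_one : mx (1 : S) = 1 :=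
  eq_one_of_one_nle (nle_mx 1)

end MaxOperation

/-- If `T` is a subset of an F-inverse monoid `S` containing every max-element
and closed under multiplication, then `T` contains `1`, is closed under `⁻¹` and under `m`,
and with the restricted operations `T` is itself an F-inverse monoid whose max-operation is
the restriction of `m`: for every `t ∈ T`, `m t` lies in the σ-class of `t` with respect to
the minimum group congruence of `T` (idempotent witnesses taken in `T`) and every element of
`T` in that class lies below `m t` in the natural partial order of `T`. -/
theorem statement4 {S : Type u} [FInverseMonoid S] (T : Set S)
    (hmxT : ∀ a : S, mx a ∈ T)
    (hmul : ∀ a ∈ T, ∀ b ∈ T, a * b ∈ T) :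
    (1 : S) ∈ T ∧
    (∀ a ∈ T, a⁻¹ ∈ T) ∧
    (∀ a ∈ T, mx a ∈ T) ∧
    ∀ t ∈ T,
      (∃ e ∈ T, e * e = e ∧ mx t * e = t * e) ∧
      ∀ b ∈ T, (∃ e ∈ T, e * e = e ∧ b * e = t * e) →
        ∃ e ∈ T, e * e = e ∧ b = mx t * e := by
  have hinv : ∀ a ∈ T, a⁻¹ ∈ T := fun a ha => by
    rw [← mx_inv_mul_mul_mx_inv a]
    exact hmul _ (hmul _ (hmxT _) a ha) _ (hmxT _)
  have hdom : ∀ a ∈ T, a⁻¹ * a ∈ T := fun a ha => hmul _ (hinv a ha) a ha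
  refine ⟨mx_one (S := S) ▸ hmxT 1, hinv, fun a _ => hmxT a, fun t ht => ⟨?_, ?_⟩⟩
  · refine ⟨t⁻¹ * t, hdom t ht, inv_mul_idem t, ?_⟩
    rw [mx_mul_inv_mul_self, ← mul_assoc, InverseMonoid.mul_inv_self_mul]
  · rintro b hb ⟨e, -, he, hbe⟩
    exact ⟨b⁻¹ * b, hdom b hb, inv_mul_idem b, (nle_mx_of_sigma ⟨e, he, hbe⟩).eq_mul_inv_mul⟩

end FInvPaper
end

section
/- Let G be an X-generated group. Then F(G) with multiplication (Γ,g)·(Γ',g') = (Γ ∪ g·Γ', g·g') is an inverse monoid with identity element (Γ₁, 1) and inversion (Γ,g)⁻¹ = (g⁻¹·Γ, g⁻¹); its idempotents are precisely the elements of the form (Γ,1), so that the idempotents of F(G) form a semilattice isomorphic to the semilattice (under union) of all finite subgraphs of Cay(G) containing 1 as a vertex; and for all (Γ,g), (Γ',g') ∈ F(G), the natural partial order satisfies (Γ,g) ≤ (Γ',g') if and only if g = g' and Γ' ⊆ Γ. -/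
namespace FInvPaper

universe u v w

/-!
`F(G)` sits inside the semidirect product of the semilattice of subgraphs of `Cay(G)` (under
union) by the translation action of `G`, so the inverse-monoid laws reduce to union being
associative, commutative and idempotent and to translation acting by union homomorphisms;
the condition `1, g ∈ Γ` is what makes `(Γ₁, 1)` a two-sided identity. An element `(Γ, g)` is
idempotent iff `g = 1`, and then multiplication is just union.
-/

section FExpInverseMonoid

variable {G : Type u} [Group G] {X : Type v} {φ : X → G}

namespace Subgraph

lemma union_assoc (Γ Δ Ξ : Subgraph φ) : (Γ ∪ Δ) ∪ Ξ = Γ ∪ (Δ ∪ Ξ) :=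
  ext' (Set.union_assoc _ _ _) (Set.union_assoc _ _ _)

lemma union_comm (Γ Δ : Subgraph φ) : Γ ∪ Δ = Δ ∪ Γ :=
  ext' (Set.union_comm _ _) (Set.union_comm _ _)

lemma union_self (Γ : Subgraph φ) : Γ ∪ Γ = Γ :=
  ext' (Set.union_self _) (Set.union_self _)

lemma union_eq_self_of_subset_left {Γ Δ : Subgraph φ} (h : Γ ⊆ Δ) : Γ ∪ Δ = Δ :=
  ext' (Set.union_eq_self_of_subset_left h.1) (Set.union_eq_self_of_subset_left h.2)

lemma subset_union_left (Γ Δ : Subgraph φ) : Γ ⊆ Γ ∪ Δ :=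
  ⟨Set.subset_union_left, Set.subset_union_left⟩

lemma smul_smul (g h : G) (Γ : Subgraph φ) : g • h • Γ = (g * h) • Γ :=
  ext' (by simp only [smul_verts, Set.image_image, mul_assoc])
    (by simp only [smul_edges, Set.image_image, mul_assoc])

lemma one_smul (Γ : Subgraph φ) : (1 : G) • Γ = Γ :=
  ext' (by simp only [smul_verts, _root_.one_mul, Set.image_id'])
    (by simp only [smul_edges, _root_.one_mul, Prod.mk.eta, Set.image_id'])

lemma smul_union (g : G) (Γ Δ : Subgraph φ) : g • (Γ ∪ Δ) = g • Γ ∪ g • Δ :=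
  ext' (Set.image_union _ _ _) (Set.image_union _ _ _)

lemma smul_deltaG_one_subset {Γ : Subgraph φ} {g : G} (hg : g ∈ Γ.verts) :
    g • deltaG φ 1 ⊆ Γ := by
  refine ⟨?_, fun e ⟨_, he, _⟩ => absurd he (Set.notMem_empty _)⟩
  rintro v ⟨u, hu, rfl⟩
  obtain rfl : u = 1 := by simpa [deltaG] using hu
  simpa using hg

end Subgraph

open Subgraph

namespace FExp

lemma mul_assoc (a b c : FExp φ) : a * b * c = a * (b * c) := by
  refine ext' ?_ (_root_.mul_assoc _ _ _)
  simp only [mul_graph, mul_elt, smul_union, Subgraph.smul_smul, union_assoc]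

lemma one_mul (a : FExp φ) : 1 * a = a := by
  refine ext' ?_ (_root_.one_mul _)
  rw [mul_graph, one_graph, one_elt, Subgraph.one_smul]
  exact union_eq_self_of_subset_left
    (by simpa only [Subgraph.one_smul] using smul_deltaG_one_subset a.one_mem)

lemma mul_one (a : FExp φ) : a * 1 = a := by
  refine ext' ?_ (_root_.mul_one _)
  rw [mul_graph, one_graph, union_comm]
  exact union_eq_self_of_subset_left (smul_deltaG_one_subset a.elt_mem)

lemma mul_inv_mul (a : FExp φ) : a * a⁻¹ * a = a := by
  refine ext' ?_ (by simp)
  simp only [mul_graph, mul_elt, inv_graph, inv_elt, Subgraph.smul_smul, mul_inv_cancel,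
    Subgraph.one_smul, union_self]

lemma inv_inv (a : FExp φ) : a⁻¹⁻¹ = a := by
  refine ext' ?_ (_root_.inv_inv _)
  simp only [inv_graph, inv_elt, Subgraph.smul_smul, _root_.inv_inv, mul_inv_cancel,
    Subgraph.one_smul]

lemma mul_inv_rev (a b : FExp φ) : (a * b)⁻¹ = b⁻¹ * a⁻¹ := by
  refine ext' ?_ (_root_.mul_inv_rev _ _)
  simp only [inv_graph, mul_graph, mul_elt, inv_elt, smul_union, Subgraph.smul_smul,
    _root_.mul_inv_rev, inv_mul_cancel_right, union_comm]

lemma mul_self_eq_self_iff (a : FExp φ) : a * a = a ↔ a.elt = 1 := by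
  refine ⟨fun h => mul_eq_left.mp (congrArg elt h), fun h => ext' ?_ (by simp [h])⟩
  rw [mul_graph, h, Subgraph.one_smul, union_self]

lemma mul_comm_of_idempotent {e f : FExp φ} (he : e * e = e) (hf : f * f = f) :
    e * f = f * e := by
  rw [mul_self_eq_self_iff] at he hf
  refine ext' ?_ (by rw [mul_elt, mul_elt, he, hf])
  rw [mul_graph, mul_graph, he, hf, Subgraph.one_smul, Subgraph.one_smul, union_comm]

lemma nle_iff (a b : FExp φ) : nle a b ↔ a.elt = b.elt ∧ b.graph ⊆ a.graph := by
  constructor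
  · rintro ⟨e, he, rfl⟩
    rw [mul_self_eq_self_iff] at he
    exact ⟨by rw [mul_elt, he, _root_.mul_one], subset_union_left _ _⟩
  · rintro ⟨helt, hsub⟩
    refine ⟨b⁻¹ * a, (mul_self_eq_self_iff _).mpr (by simp [helt]), ext' ?_ (by simp [helt])⟩
    -- `b·(b⁻¹a)` has graph `Γ_b ∪ Γ_a`, which is `Γ_a` as `Γ_b ⊆ Γ_a`.
    simp only [mul_graph, inv_graph, inv_elt, smul_union, Subgraph.smul_smul, mul_inv_cancel,
      Subgraph.one_smul]
    rw [← union_assoc, union_self, union_eq_self_of_subset_left hsub]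

def idempotentEquiv (φ : X → G) :
    {a : FExp φ // a * a = a} ≃ {Γ : Subgraph φ // Γ.IsFinite ∧ (1 : G) ∈ Γ.verts} where
  toFun a := ⟨a.1.graph, a.1.finite, a.1.one_mem⟩
  invFun Γ := ⟨⟨Γ.1, 1, Γ.2.1, Γ.2.2, Γ.2.2⟩, (mul_self_eq_self_iff _).mpr rfl⟩
  left_inv a := Subtype.ext (ext' rfl ((mul_self_eq_self_iff a.1).mp a.2).symm)
  right_inv _ := rfl

lemma idempotentEquiv_mul (a b : {a : FExp φ // a * a = a})
    (h : (a.1 * b.1) * (a.1 * b.1) = a.1 * b.1) :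
    (idempotentEquiv φ ⟨a.1 * b.1, h⟩).1 =
      (idempotentEquiv φ a).1 ∪ (idempotentEquiv φ b).1 := by
  change a.1.graph ∪ a.1.elt • b.1.graph = _
  rw [(mul_self_eq_self_iff a.1).mp a.2, Subgraph.one_smul]
  rfl

end FExp

end FExpInverseMonoid

theorem statement7_general {G : Type u} [Group G] {X : Type v} (φ : X → G) :
    -- monoid axioms
    (∀ a b c : FExp φ, a * b * c = a * (b * c)) ∧
    (∀ a : FExp φ, 1 * a = a ∧ a * 1 = a) ∧
    -- the identity element is (Γ₁, 1)
    ((1 : FExp φ).graph.verts = {1} ∧ (1 : FExp φ).graph.edges = ∅ ∧ (1 : FExp φ).elt = 1) ∧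
    -- the inversion is (Γ,g)⁻¹ = (g⁻¹Γ, g⁻¹), and it makes F(G) an inverse monoid
    (∀ a : FExp φ, (a⁻¹).graph = a.elt⁻¹ • a.graph ∧ (a⁻¹).elt = a.elt⁻¹) ∧
    (∀ a : FExp φ, a * a⁻¹ * a = a) ∧
    (∀ a : FExp φ, (a⁻¹)⁻¹ = a) ∧
    (∀ a b : FExp φ, (a * b)⁻¹ = b⁻¹ * a⁻¹) ∧
    (∀ e f : FExp φ, e * e = e → f * f = f → e * f = f * e) ∧
    -- idempotents are precisely the elements (Γ, 1)
    (∀ a : FExp φ, a * a = a ↔ a.elt = 1) ∧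
    -- the idempotents form a semilattice isomorphic to the semilattice of all finite
    -- subgraphs of Cay(G) containing the vertex 1, under union
    (∃ ψ : {a : FExp φ // a * a = a} ≃
        {Γ : Subgraph φ // Γ.IsFinite ∧ (1 : G) ∈ Γ.verts},
      ∀ (a b : {a : FExp φ // a * a = a}) (h : (a.1 * b.1) * (a.1 * b.1) = a.1 * b.1),
        (ψ ⟨a.1 * b.1, h⟩).1 = (ψ a).1 ∪ (ψ b).1) ∧
    -- description of the natural partial order
    (∀ a b : FExp φ, nle a b ↔ a.elt = b.elt ∧ b.graph ⊆ a.graph) :=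
  ⟨FExp.mul_assoc, fun a => ⟨FExp.one_mul a, FExp.mul_one a⟩, ⟨Set.pair_eq_singleton 1, rfl, rfl⟩,
    fun _ => ⟨rfl, rfl⟩, FExp.mul_inv_mul, FExp.inv_inv, FExp.mul_inv_rev,
    fun _ _ => FExp.mul_comm_of_idempotent, FExp.mul_self_eq_self_iff,
    ⟨FExp.idempotentEquiv φ, FExp.idempotentEquiv_mul⟩, FExp.nle_iff⟩

/-- For an `X`-generated group `G`, `F(G)` with multiplication
`(Γ,g)·(Γ',g') = (Γ ∪ g·Γ', g·g')` is an inverse monoid with identity `(Γ₁, 1)` and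
inversion `(Γ,g)⁻¹ = (g⁻¹·Γ, g⁻¹)`; its idempotents are precisely the elements `(Γ,1)`, so
they form a semilattice isomorphic to the semilattice (under union) of all finite subgraphs
of `Cay(G)` containing `1` as a vertex; and the natural partial order satisfies
`(Γ,g) ≤ (Γ',g')` iff `g = g'` and `Γ' ⊆ Γ`. -/
theorem statement7 {G : Type u} [Group G] {X : Type v} (φ : X → G)
    (hφ : Subgroup.closure (Set.range φ) = ⊤) :
    -- monoid axioms
    (∀ a b c : FExp φ, a * b * c = a * (b * c)) ∧
    (∀ a : FExp φ, 1 * a = a ∧ a * 1 = a) ∧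
    -- the identity element is (Γ₁, 1)
    ((1 : FExp φ).graph.verts = {1} ∧ (1 : FExp φ).graph.edges = ∅ ∧ (1 : FExp φ).elt = 1) ∧
    -- the inversion is (Γ,g)⁻¹ = (g⁻¹Γ, g⁻¹), and it makes F(G) an inverse monoid
    (∀ a : FExp φ, (a⁻¹).graph = a.elt⁻¹ • a.graph ∧ (a⁻¹).elt = a.elt⁻¹) ∧
    (∀ a : FExp φ, a * a⁻¹ * a = a) ∧
    (∀ a : FExp φ, (a⁻¹)⁻¹ = a) ∧
    (∀ a b : FExp φ, (a * b)⁻¹ = b⁻¹ * a⁻¹) ∧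
    (∀ e f : FExp φ, e * e = e → f * f = f → e * f = f * e) ∧
    -- idempotents are precisely the elements (Γ, 1)
    (∀ a : FExp φ, a * a = a ↔ a.elt = 1) ∧
    -- the idempotents form a semilattice isomorphic to the semilattice of all finite
    -- subgraphs of Cay(G) containing the vertex 1, under union
    (∃ ψ : {a : FExp φ // a * a = a} ≃
        {Γ : Subgraph φ // Γ.IsFinite ∧ (1 : G) ∈ Γ.verts},
      ∀ (a b : {a : FExp φ // a * a = a}) (h : (a.1 * b.1) * (a.1 * b.1) = a.1 * b.1),
        (ψ ⟨a.1 * b.1, h⟩).1 = (ψ a).1 ∪ (ψ b).1) ∧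
    -- description of the natural partial order
    (∀ a b : FExp φ, nle a b ↔ a.elt = b.elt ∧ b.graph ⊆ a.graph) :=
  statement7_general φ

end FInvPaper
end
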